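/- arXiv:2004.13234 — 5 statements merged into one kernel-verified Lean document; each statement's English description precedes it below -/
import Mathlib

section
/- Let a ≥ 2 be an integer and let ε > 0 be real. For every real p, the function x ↦ e^{ipx}·(x − iε)^{−a} is integrable on ℝ, and ∫_ℝ e^{ipx} (x − iε)^{−a} dx = 2π · i^a · p^{a−1} · e^{−εp} / (a−1)! if p > 0, while ∫_ℝ e^{ipx} (x − iε)^{−a} dx = 0 if p ≤ 0. -/
/-!
With `n = a - 1`, the causal pulse `h(t) = θ(t) tⁿ e^{-εt}` has Fourier transform
`n! / (ε + 2πiξ)ⁿ⁺¹` (a Laplace transform, computed by integrating by parts), which is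
integrable because `n + 1 ≥ 2`. Fourier inversion at `p`, after substituting `x = 2πξ` and
writing `ε + ix = i (x - iε)`, expresses `∫ e^{ipx} (x - iε)^{-a} dx` as `2π iᵃ h(p) / n!`.
-/

open MeasureTheory Complex Set Filter Topology FourierTransform

section LaplaceHalfLine

variable {c : ℂ}

lemma norm_ofReal_pow_mul_cexp_neg_mul (n : ℕ) (t : ℝ) :
    ‖(t : ℂ) ^ n * cexp (-(c * t))‖ = |t| ^ n * Real.exp (-(c.re * t)) := by
  simp [norm_exp]

lemma integrableOn_Ioi_pow_mul_cexp_neg_mul (n : ℕ) (hc : 0 < c.re) :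
    IntegrableOn (fun t : ℝ => (t : ℂ) ^ n * cexp (-(c * t))) (Ioi 0) := by
  have hreal :
      IntegrableOn (fun t : ℝ => t ^ (n : ℝ) * Real.exp (-c.re * t ^ (1 : ℝ))) (Ioi 0) :=
    integrableOn_rpow_mul_exp_neg_mul_rpow (by linarith [n.cast_nonneg (α := ℝ)]) one_pos hc
  refine hreal.mono' (by fun_prop) ((ae_restrict_iff' measurableSet_Ioi).2 (.of_forall ?_))
  intro t (ht : 0 < t)
  rw [norm_ofReal_pow_mul_cexp_neg_mul, abs_of_pos ht, Real.rpow_natCast, Real.rpow_one, neg_mul]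

lemma tendsto_pow_mul_cexp_neg_mul_atTop (n : ℕ) (hc : 0 < c.re) :
    Tendsto (fun t : ℝ => (t : ℂ) ^ n * cexp (-(c * t))) atTop (𝓝 0) := by
  rw [tendsto_zero_iff_norm_tendsto_zero]
  refine (tendsto_rpow_mul_exp_neg_mul_atTop_nhds_zero n c.re hc).congr' ?_
  filter_upwards [eventually_ge_atTop 0] with t ht
  rw [norm_ofReal_pow_mul_cexp_neg_mul, abs_of_nonneg ht, Real.rpow_natCast, neg_mul]

lemma hasDerivAt_pow_succ_mul_cexp_neg_mul (n : ℕ) (c : ℂ) (t : ℝ) :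
    HasDerivAt (fun t : ℝ => (t : ℂ) ^ (n + 1) * cexp (-(c * t)))
      ((n + 1) * ((t : ℂ) ^ n * cexp (-(c * t))) - c * ((t : ℂ) ^ (n + 1) * cexp (-(c * t))))
      t := by
  have hpow := (hasDerivAt_pow (n + 1) (t : ℂ)).comp_ofReal
  have hexp := (((hasDerivAt_id (t : ℂ)).const_mul c).neg.cexp).comp_ofReal
  refine (hpow.mul hexp).congr_deriv ?_
  simp only [Nat.add_sub_cancel, Nat.cast_add, Nat.cast_one, Pi.neg_apply, id, mul_one]
  ring

lemma integral_Ioi_pow_mul_cexp_neg_mul (n : ℕ) (hc : 0 < c.re) :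
    ∫ t in Ioi (0 : ℝ), (t : ℂ) ^ n * cexp (-(c * t)) = n.factorial / c ^ (n + 1) := by
  have hc0 : c ≠ 0 := fun h => by simp [h] at hc
  induction n with
  | zero =>
    simpa [neg_mul] using integral_exp_mul_complex_Ioi (a := -c) (by simpa using hc) 0
  | succ n ih =>
    have hint := integrableOn_Ioi_pow_mul_cexp_neg_mul n hc
    have hint' := integrableOn_Ioi_pow_mul_cexp_neg_mul (n + 1) hc
    have hibp := integral_Ioi_of_hasDerivAt_of_tendsto'
      (fun t _ => hasDerivAt_pow_succ_mul_cexp_neg_mul n c t)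
      ((hint.const_mul _).sub (hint'.const_mul _)) (tendsto_pow_mul_cexp_neg_mul_atTop (n + 1) hc)
    rw [integral_sub (hint.const_mul _) (hint'.const_mul _), integral_const_mul,
      integral_const_mul, ih] at hibp
    simp only [ofReal_zero, zero_pow n.succ_ne_zero, zero_mul, sub_zero] at hibp
    rw [eq_div_iff (pow_ne_zero _ hc0), Nat.factorial_succ]
    field_simp at hibp
    push_cast
    linear_combination (-1 : ℂ) * hibp

end LaplaceHalfLine

section HalfLinePowExp

variable {n : ℕ} {c : ℂ}

/-- `t ↦ θ(t) tⁿ e^{-ct}`, written with `max` so that it is continuous as soon as `n ≠ 0`. -/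
noncomputable def halfLinePowExp (n : ℕ) (c : ℂ) (t : ℝ) : ℂ :=
  ((max t 0 : ℝ) : ℂ) ^ n * cexp (-(c * t))

lemma halfLinePowExp_of_nonneg {t : ℝ} (ht : 0 ≤ t) :
    halfLinePowExp n c t = (t : ℂ) ^ n * cexp (-(c * t)) := by
  rw [halfLinePowExp, max_eq_left ht]

lemma halfLinePowExp_of_nonpos (hn : n ≠ 0) {t : ℝ} (ht : t ≤ 0) :
    halfLinePowExp n c t = 0 := by
  rw [halfLinePowExp, max_eq_right ht, ofReal_zero, zero_pow hn, zero_mul]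

lemma continuous_halfLinePowExp : Continuous (halfLinePowExp n c) := by
  unfold halfLinePowExp
  fun_prop

lemma integrable_halfLinePowExp (hn : n ≠ 0) (hc : 0 < c.re) :
    Integrable (halfLinePowExp n c) := by
  rw [← integrableOn_univ, ← Iic_union_Ioi (a := 0)]
  refine .union (integrableOn_zero.congr_fun (fun t ht => ?_) measurableSet_Iic)
    ((integrableOn_Ioi_pow_mul_cexp_neg_mul n hc).congr_fun (fun t ht => ?_) measurableSet_Ioi)
  · exact (halfLinePowExp_of_nonpos hn ht).symm
  · exact (halfLinePowExp_of_nonneg ht.le).symm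

lemma fourier_halfLinePowExp (hn : n ≠ 0) (hc : 0 < c.re) (ξ : ℝ) :
    𝓕 (halfLinePowExp n c) ξ = n.factorial / (c + (2 * Real.pi * ξ : ℝ) * I) ^ (n + 1) := by
  have hc' : 0 < (c + (2 * Real.pi * ξ : ℝ) * I).re := by simpa using hc
  rw [Real.fourier_real_eq_integral_exp_smul, ← integral_Ioi_pow_mul_cexp_neg_mul n hc',
    ← setIntegral_eq_integral_of_forall_compl_eq_zero fun t ht => ?_]
  · refine setIntegral_congr_fun measurableSet_Ioi fun t (ht : 0 < t) => ?_
    rw [halfLinePowExp_of_nonneg ht.le, smul_eq_mul, mul_left_comm, ← Complex.exp_add]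
    push_cast
    ring_nf
  · rw [halfLinePowExp_of_nonpos hn (not_lt.1 ht), smul_zero]

end HalfLinePowExp

lemma integrable_inv_sq_add_sq {ε : ℝ} (hε : ε ≠ 0) :
    Integrable fun x : ℝ => (x ^ 2 + ε ^ 2)⁻¹ := by
  refine ((integrable_inv_one_add_sq.comp_div hε).const_mul (ε ^ 2)⁻¹).congr
    (.of_forall fun x => ?_)
  field_simp
  ring

lemma norm_ofReal_sub_mul_I_sq (x ε : ℝ) : ‖(x : ℂ) - I * ε‖ ^ 2 = x ^ 2 + ε ^ 2 := by
  rw [Complex.sq_norm, normSq_apply]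
  simp
  ring

lemma integrable_ofReal_sub_mul_I_zpow_neg {ε : ℝ} (hε : ε ≠ 0) {a : ℕ} (ha : 2 ≤ a) :
    Integrable fun x : ℝ => ((x : ℂ) - I * ε) ^ (-(a : ℤ)) := by
  have hne : ∀ x : ℝ, (x : ℂ) - I * ε ≠ 0 := fun x h => by
    simpa [hε] using congrArg im h
  refine ((integrable_inv_sq_add_sq hε).const_mul (|ε| ^ (a - 2))⁻¹).mono'
    ((continuous_ofReal.sub continuous_const).zpow₀ _ fun x => .inl (hne x)).aestronglyMeasurable
    (.of_forall fun x => ?_)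
  set r := ‖(x : ℂ) - I * ε‖
  have hεr : |ε| ≤ r := by simpa [r] using abs_im_le_norm ((x : ℂ) - I * ε)
  have hsq : x ^ 2 + ε ^ 2 = r ^ 2 := (norm_ofReal_sub_mul_I_sq x ε).symm
  rw [norm_zpow, zpow_neg, zpow_natCast, hsq, ← mul_inv,
    show r ^ a = r ^ (a - 2) * r ^ 2 by rw [← pow_add, Nat.sub_add_cancel ha]]
  gcongr
  have hr : 0 < r := (abs_pos.2 hε).trans_le hεr
  positivity

lemma ofReal_add_ofReal_mul_I (ε x : ℝ) : (ε : ℂ) + x * I = I * (x - I * ε) := by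
  ring_nf
  rw [I_sq]
  ring

lemma integral_cexp_mul_ofReal_sub_mul_I_zpow_neg {n : ℕ} (hn : n ≠ 0) {ε : ℝ} (hε : 0 < ε)
    (p : ℝ) :
    ∫ x : ℝ, cexp (I * p * x) * ((x : ℂ) - I * ε) ^ (-((n + 1 : ℕ) : ℤ))
      = 2 * Real.pi * I ^ (n + 1) * halfLinePowExp n ε p / n.factorial := by
  set P : ℝ → ℂ := fun x => cexp (I * p * x) * ((x : ℂ) - I * ε) ^ (-((n + 1 : ℕ) : ℤ))
  have hF : 𝓕 (halfLinePowExp n ε) = fun ξ => n.factorial * I ^ (-((n + 1 : ℕ) : ℤ)) *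
      (((2 * Real.pi * ξ : ℝ) : ℂ) - I * ε) ^ (-((n + 1 : ℕ) : ℤ)) := by
    funext ξ
    rw [fourier_halfLinePowExp hn (by simpa using hε), ofReal_add_ofReal_mul_I,
      mul_assoc (n.factorial : ℂ), ← mul_zpow, zpow_neg, zpow_natCast, div_eq_mul_inv]
  have hFint : Integrable (𝓕 (halfLinePowExp n ε)) := by
    rw [hF]
    exact ((integrable_ofReal_sub_mul_I_zpow_neg hε.ne' (by omega)).comp_mul_left'
      Real.two_pi_pos.ne').const_mul _
  have hinv := (integrable_halfLinePowExp hn (c := ε) (by simpa using hε)).fourierInv_fourier_eq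
    hFint continuous_halfLinePowExp.continuousAt (v := p)
  rw [Real.fourierInv_eq', hF] at hinv
  have hsubst : ∀ ξ : ℝ, cexp (((2 * Real.pi * inner ℝ ξ p : ℝ) : ℂ) * I) •
      (n.factorial * I ^ (-((n + 1 : ℕ) : ℤ)) *
        (((2 * Real.pi * ξ : ℝ) : ℂ) - I * ε) ^ (-((n + 1 : ℕ) : ℤ)))
      = n.factorial * I ^ (-((n + 1 : ℕ) : ℤ)) * P (2 * Real.pi * ξ) := by
    intro ξ
    rw [Real.inner_apply, smul_eq_mul]
    simp only [P]
    push_cast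
    ring_nf
  rw [integral_congr_ae (.of_forall hsubst), integral_const_mul,
    Measure.integral_comp_mul_left P] at hinv
  rw [← hinv, abs_of_pos (by positivity), real_smul, zpow_neg, zpow_natCast]
  have hπ : (Real.pi : ℂ) ≠ 0 := ofReal_ne_zero.2 Real.pi_ne_zero
  have hfac : (n.factorial : ℂ) ≠ 0 := Nat.cast_ne_zero.2 n.factorial_ne_zero
  push_cast
  field_simp

lemma MeasureTheory.Integrable.cexp_I_mul_mul {f : ℝ → ℂ} (hf : Integrable f) (p : ℝ) :
    Integrable fun x : ℝ => cexp (I * p * x) * f x :=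
  hf.bdd_mul (c := 1) (by fun_prop) (.of_forall fun x => by
    rw [norm_exp, show (I * p * x).re = 0 by simp, Real.exp_zero])

/-- The Fourier transform building block of lightcone conformal truncation:
for an integer `a ≥ 2` and `ε > 0`, the function `x ↦ e^{ipx}(x − iε)^{−a}` is
integrable on `ℝ`, and its integral equals `2π i^a p^{a−1} e^{−εp}/(a−1)!` for
`p > 0` and `0` for `p ≤ 0`. -/
theorem fourier_transform_pole (a : ℕ) (ha : 2 ≤ a) (ε : ℝ) (hε : 0 < ε) (p : ℝ) :
    Integrable (fun x : ℝ =>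
      Complex.exp (Complex.I * p * x) * ((x : ℂ) - Complex.I * ε) ^ (-(a : ℤ))) ∧
    (0 < p →
      ∫ x : ℝ, Complex.exp (Complex.I * p * x) * ((x : ℂ) - Complex.I * ε) ^ (-(a : ℤ))
        = 2 * Real.pi * Complex.I ^ a * (p : ℂ) ^ (a - 1) * Complex.exp (-(ε * p))
            / (Nat.factorial (a - 1) : ℂ)) ∧
    (p ≤ 0 →
      ∫ x : ℝ, Complex.exp (Complex.I * p * x) * ((x : ℂ) - Complex.I * ε) ^ (-(a : ℤ))
        = 0) := by
  obtain ⟨n, rfl⟩ : ∃ n, a = n + 1 := ⟨a - 1, by omega⟩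
  have hn : n ≠ 0 := by omega
  have hJ := integral_cexp_mul_ofReal_sub_mul_I_zpow_neg hn hε p
  refine ⟨(integrable_ofReal_sub_mul_I_zpow_neg hε.ne' ha).cexp_I_mul_mul p,
    fun hp => ?_, fun hp => ?_⟩
  · rw [hJ, halfLinePowExp_of_nonneg hp.le, Nat.add_sub_cancel]
    ring
  · rw [hJ, halfLinePowExp_of_nonpos hn hp, mul_zero, zero_div]
end

section
/- For all nonnegative integers ℓ and ℓ', and for every x₁ ∈ (0,1), the principal-value limit lim_{δ→0⁺} ∫_{[0,1]∖(x₁−δ, x₁+δ)} P_ℓ(1−2x₁)·(P_{ℓ'}(1−2x₁) − P_{ℓ'}(1−2x₂))/(x₁−x₂)² dx₂ exists, and the resulting function of x₁ is integrable on (0,1); hence the quantity J(ℓ,ℓ') is well defined. -/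
open MeasureTheory Filter Set

/-- The Legendre polynomial `P_ℓ`, via the Rodrigues formula
`P_ℓ(w) = (1/(2^ℓ ℓ!)) (d/dw)^ℓ (w²−1)^ℓ`. -/
noncomputable def legendreP (ℓ : ℕ) (w : ℝ) : ℝ :=
  ((2 : ℝ) ^ ℓ * Nat.factorial ℓ)⁻¹ * iteratedDeriv ℓ (fun t : ℝ => (t ^ 2 - 1) ^ ℓ) w

/-- `IsJ ℓ ℓ' v` asserts that the quantity
`J(ℓ,ℓ') = ∫₀¹ (PV ∫₀¹ P_ℓ(1−2x₁)(P_{ℓ'}(1−2x₁) − P_{ℓ'}(1−2x₂))/(x₁−x₂)² dx₂) dx₁`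
is well defined and equals `v`: there is a function `g` such that for every
`x₁ ∈ (0,1)` the inner principal value (around `x₂ = x₁`) exists and equals
`g x₁`, `g` is integrable on `(0,1)`, and `∫₀¹ g = v`. -/
def IsJ (ℓ ℓ' : ℕ) (v : ℝ) : Prop :=
  ∃ g : ℝ → ℝ,
    (∀ x₁ ∈ Ioo (0 : ℝ) 1,
      Tendsto (fun δ : ℝ =>
          ∫ x₂ in Ioo (0 : ℝ) 1 \ Ioo (x₁ - δ) (x₁ + δ),
            legendreP ℓ (1 - 2 * x₁) * (legendreP ℓ' (1 - 2 * x₁) - legendreP ℓ' (1 - 2 * x₂))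
              / (x₁ - x₂) ^ 2)
        (nhdsWithin 0 (Ioi 0)) (nhds (g x₁))) ∧
    IntegrableOn g (Ioo (0 : ℝ) 1) ∧
    ∫ x₁ in Ioo (0 : ℝ) 1, g x₁ = v

/-! Write `q x = P_{ℓ'}(1 - 2x)`, a polynomial. Its second-order Taylor expansion at `a` gives
`(q a - q y) / (a - y)² = q'(a) / (a - y) - R(a, y)` with `R` a polynomial in `(a, y)`. The
principal value of `∫₀¹ dy / (a - y)` equals `log a - log (1 - a)` as soon as
`δ < min a (1 - a)`, and the integrals of `R(a, ·)` over the punctured interval converge by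
absolute continuity of the integral. The limit `q'(a) (log a - log (1 - a)) - ∫₀¹ R(a, y) dy` is
integrable in `a` because `log` is integrable near `0` and `R` is jointly continuous. -/

open Real Topology Polynomial

theorem Ioo_diff_Ioo_eq_Ioc_union_Ico {a b c δ : ℝ} (hb : b < a + δ) (hc : a - δ < c) :
    Ioo b c \ Ioo (a - δ) (a + δ) = Ioc b (a - δ) ∪ Ico (a + δ) c := by
  ext y
  simp only [Set.mem_sdiff, mem_Ioo, mem_union, mem_Ioc, mem_Ico, not_and, not_lt]
  constructor
  · rintro ⟨⟨hby, hyc⟩, hy⟩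
    by_cases h : a - δ < y
    · exact Or.inr ⟨hy h, hyc⟩
    · exact Or.inl ⟨hby, not_lt.mp h⟩
  · rintro (⟨hby, hy⟩ | ⟨hy, hyc⟩)
    · exact ⟨⟨hby, by linarith⟩, fun h => by linarith⟩
    · exact ⟨⟨by linarith, hyc⟩, fun h => by linarith⟩

theorem integrableOn_inv_sub_Ioo_diff_Ioo {a b c δ : ℝ} (hδ : 0 < δ) :
    IntegrableOn (fun y => (a - y)⁻¹) (Ioo b c \ Ioo (a - δ) (a + δ)) := by
  refine (ContinuousOn.integrableOn_compact (isCompact_Icc.diff isOpen_Ioo) ?_).mono_set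
    (sdiff_subset_sdiff_left Ioo_subset_Icc_self)
  refine ContinuousOn.inv₀ (by fun_prop) fun y hy => sub_ne_zero.mpr fun hay => hy.2 ?_
  exact ⟨by linarith, by linarith⟩

theorem integral_inv_sub_Ioo_diff_Ioo {a b c δ : ℝ} (hδ : 0 < δ) (hb : b < a - δ)
    (hc : a + δ < c) :
    ∫ y in Ioo b c \ Ioo (a - δ) (a + δ), (a - y)⁻¹ = log (a - b) - log (c - a) := by
  have hS : Ioo b c \ Ioo (a - δ) (a + δ) = Ioc b (a - δ) ∪ Ico (a + δ) c :=
    Ioo_diff_Ioo_eq_Ioc_union_Ico (by linarith) (by linarith)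
  have hI : IntegrableOn (fun y => (a - y)⁻¹) (Ioc b (a - δ) ∪ Ico (a + δ) c) :=
    hS ▸ integrableOn_inv_sub_Ioo_diff_Ioo hδ
  have hdisj : Disjoint (Ioc b (a - δ)) (Ico (a + δ) c) :=
    Set.disjoint_left.mpr fun y hy hy' => by linarith [hy.2, hy'.1]
  have hleft : ∫ y in Ioc b (a - δ), (a - y)⁻¹ = log (a - b) - log δ := by
    rw [← intervalIntegral.integral_of_le (by linarith),
      intervalIntegral.integral_comp_sub_left (fun u => u⁻¹), sub_sub_cancel,
      integral_inv_of_pos (by linarith) (by linarith), log_div (by linarith) (by linarith)]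
  have hright : ∫ y in Ico (a + δ) c, (a - y)⁻¹ = log δ - log (c - a) := by
    rw [integral_Ico_eq_integral_Ioo, ← integral_Ioc_eq_integral_Ioo,
      ← intervalIntegral.integral_of_le (by linarith),
      intervalIntegral.integral_comp_sub_left (fun u => u⁻¹), sub_add_cancel_left,
      integral_inv_of_neg (by linarith) (by linarith), log_div (by linarith) (by linarith),
      ← neg_sub c a, log_neg_eq_log, log_neg_eq_log]
  rw [hS, setIntegral_union hdisj measurableSet_Ico (hI.mono_set subset_union_left)
    (hI.mono_set subset_union_right), hleft, hright]
  ring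

theorem tendsto_setIntegral_Ioo_diff_Ioo {R : ℝ → ℝ} {b c : ℝ} (hR : IntegrableOn R (Ioo b c))
    (a : ℝ) :
    Tendsto (fun δ => ∫ y in Ioo b c \ Ioo (a - δ) (a + δ), R y) (𝓝 0)
      (𝓝 (∫ y in Ioo b c, R y)) := by
  have hvol : Tendsto (fun δ => volume (Ioo (a - δ) (a + δ))) (𝓝 0) (𝓝 0) := by
    simp only [Real.volume_Ioo]
    rw [← ENNReal.ofReal_zero]
    exact ENNReal.tendsto_ofReal (Continuous.tendsto' (by fun_prop) _ _ (by ring))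
  have hsmall := hR.tendsto_setIntegral_nhds_zero (s := fun δ => Ioo (a - δ) (a + δ))
    (tendsto_of_tendsto_of_tendsto_of_le_of_le tendsto_const_nhds hvol (fun _ => zero_le)
      fun _ => Measure.restrict_apply_le _ _)
  have hsplit : ∀ δ, ∫ y in Ioo b c \ Ioo (a - δ) (a + δ), R y =
      (∫ y in Ioo b c, R y) - ∫ y in Ioo (a - δ) (a + δ), R y ∂volume.restrict (Ioo b c) := by
    intro δ
    rw [Measure.restrict_restrict measurableSet_Ioo, inter_comm, ← sdiff_self_inter,
      setIntegral_sdiff (measurableSet_Ioo.inter measurableSet_Ioo) hR inter_subset_left]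
  simp only [hsplit]
  simpa only [sub_zero] using (tendsto_const_nhds (x := ∫ y in Ioo b c, R y)).sub hsmall

theorem tendsto_pv_integral_sub_div_sq {f R : ℝ → ℝ} {a b c d : ℝ} (ha : a ∈ Ioo b c)
    (hf : ∀ y, f y = f a + d * (y - a) + (y - a) ^ 2 * R y) (hR : IntegrableOn R (Ioo b c)) :
    Tendsto (fun δ => ∫ y in Ioo b c \ Ioo (a - δ) (a + δ), (f a - f y) / (a - y) ^ 2)
      (𝓝[>] 0) (𝓝 (d * (log (a - b) - log (c - a)) - ∫ y in Ioo b c, R y)) := by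
  refine (tendsto_const_nhds.sub
    ((tendsto_setIntegral_Ioo_diff_Ioo hR a).mono_left nhdsWithin_le_nhds)).congr' ?_
  have hpos : 0 < min (a - b) (c - a) := lt_min (by linarith [ha.1]) (by linarith [ha.2])
  filter_upwards [Ioo_mem_nhdsGT hpos] with δ ⟨hδ, hδa⟩
  have hδb : δ < a - b := hδa.trans_le (min_le_left _ _)
  have hδc : δ < c - a := hδa.trans_le (min_le_right _ _)
  have hquot : EqOn (fun y => (f a - f y) / (a - y) ^ 2) (fun y => d * (a - y)⁻¹ - R y)
      (Ioo b c \ Ioo (a - δ) (a + δ)) := by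
    intro y hy
    have hya : a - y ≠ 0 := sub_ne_zero.mpr fun hay => hy.2 ⟨by linarith, by linarith⟩
    dsimp only
    rw [hf y]
    field_simp
    ring
  rw [setIntegral_congr_fun (measurableSet_Ioo.diff measurableSet_Ioo) hquot,
    integral_sub ((integrableOn_inv_sub_Ioo_diff_Ioo hδ).const_mul d) (hR.mono_set sdiff_subset),
    integral_const_mul, integral_inv_sub_Ioo_diff_Ioo hδ (by linarith) (by linarith)]

theorem Polynomial.iteratedDeriv_eval {𝕜 : Type*} [NontriviallyNormedField 𝕜] (p : 𝕜[X])
    (n : ℕ) : iteratedDeriv n (fun t => p.eval t) = fun t => (derivative^[n] p).eval t := by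
  induction n with
  | zero => simp
  | succ n ih =>
    rw [iteratedDeriv_succ, ih, Function.iterate_succ_apply']
    funext t
    exact Polynomial.deriv _

noncomputable def taylorRemainder (q : ℝ[X]) (a y : ℝ) : ℝ :=
  (taylor a q).divX.divX.eval (y - a)

theorem eval_eq_add_sq_mul_taylorRemainder (q : ℝ[X]) (a y : ℝ) :
    q.eval y = q.eval a + q.derivative.eval a * (y - a) + (y - a) ^ 2 * taylorRemainder q a y := by
  have h := congrArg (eval (y - a)) (divX_mul_X_add (taylor a q))
  have h' := congrArg (eval (y - a)) (divX_mul_X_add (taylor a q).divX)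
  simp only [eval_add, eval_mul, eval_X, eval_C, coeff_divX, taylor_coeff_zero, zero_add,
    taylor_coeff_one, taylor_eval_sub] at h h'
  rw [taylorRemainder, ← h, ← h']
  ring

theorem continuous_taylorRemainder (q : ℝ[X]) :
    Continuous fun p : ℝ × ℝ => taylorRemainder q p.1 p.2 := by
  have h : ∀ a y, taylorRemainder q a y =
      ∑ k ∈ Finset.range (q.natDegree + 1), (hasseDeriv (k + 2) q).eval a * (y - a) ^ k := by
    intro a y
    rw [taylorRemainder, eval_eq_sum_range' (n := q.natDegree + 1)]
    · simp only [coeff_divX, taylor_coeff]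
    · exact Nat.lt_succ_of_le (natDegree_divX_le.trans (natDegree_divX_le.trans
        (natDegree_taylor q a).le))
  simp only [h]
  fun_prop

noncomputable def pvIntegralDivSq (q : ℝ[X]) (b c a : ℝ) : ℝ :=
  q.derivative.eval a * (log (a - b) - log (c - a)) - ∫ y in Ioo b c, taylorRemainder q a y

theorem tendsto_pv_integral_eval_sub_div_sq (q : ℝ[X]) {a b c : ℝ} (ha : a ∈ Ioo b c) :
    Tendsto (fun δ => ∫ y in Ioo b c \ Ioo (a - δ) (a + δ), (q.eval a - q.eval y) / (a - y) ^ 2)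
      (𝓝[>] 0) (𝓝 (pvIntegralDivSq q b c a)) := by
  have hR : Continuous (taylorRemainder q a) :=
    (continuous_taylorRemainder q).comp (Continuous.prodMk_right a)
  exact tendsto_pv_integral_sub_div_sq ha (eval_eq_add_sq_mul_taylorRemainder q a)
    (hR.integrableOn_Icc.mono_set Ioo_subset_Icc_self)

theorem integrableOn_pvIntegralDivSq (q : ℝ[X]) (b c : ℝ) :
    IntegrableOn (pvIntegralDivSq q b c) (Ioo b c) := by
  have hlog : IntegrableOn (fun a => log (a - b) - log (c - a)) (Ioo b c) := by
    have h₁ := (intervalIntegral.intervalIntegrable_log' (a := b - b) (b := c - b)).comp_sub_right b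
    have h₂ := (intervalIntegral.intervalIntegrable_log' (a := c - b) (b := c - c)).comp_sub_left c
    rw [sub_add_cancel, sub_add_cancel] at h₁
    rw [sub_sub_cancel, sub_sub_cancel] at h₂
    exact (h₁.sub h₂).def'.mono_set fun y hy => ⟨(min_le_left b c).trans_lt hy.1,
      hy.2.le.trans (le_max_right b c)⟩
  have hrem : Continuous fun a => ∫ y in Ioo b c, taylorRemainder q a y := by
    simp only [← integral_Icc_eq_integral_Ioo]
    exact continuous_parametric_integral_of_continuous (continuous_taylorRemainder q)
      isCompact_Icc
  exact (hlog.continuousOn_mul_of_subset q.derivative.continuous.continuousOn isCompact_Icc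
    measurableSet_Ioo Ioo_subset_Icc_self).sub
    (hrem.integrableOn_Icc.mono_set Ioo_subset_Icc_self)

noncomputable def legendrePoly (ℓ : ℕ) : ℝ[X] :=
  C ((2 ^ ℓ * ℓ.factorial : ℝ)⁻¹) * derivative^[ℓ] ((X ^ 2 - 1) ^ ℓ)

theorem legendreP_eq_eval (ℓ : ℕ) (w : ℝ) : legendreP ℓ w = (legendrePoly ℓ).eval w := by
  have h : (fun t : ℝ => (t ^ 2 - 1) ^ ℓ) = fun t => ((X ^ 2 - 1 : ℝ[X]) ^ ℓ).eval t := by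
    simp
  simp [legendreP, legendrePoly, h, Polynomial.iteratedDeriv_eval]

/-- For all nonnegative integers `ℓ, ℓ'`, the matrix element `J(ℓ,ℓ')` of 2D
large-`N_c` QCD in lightcone conformal truncation is well defined: the inner
principal value exists for each `x₁ ∈ (0,1)` and is integrable on `(0,1)`. -/
theorem J_well_defined (ℓ ℓ' : ℕ) : ∃ v : ℝ, IsJ ℓ ℓ' v := by
  have hP : ∀ n x, legendreP n (1 - 2 * x) = ((legendrePoly n).comp (1 - 2 * X)).eval x := by
    simp [legendreP_eq_eval]
  refine ⟨_, fun a => ((legendrePoly ℓ).comp (1 - 2 * X)).eval a *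
    pvIntegralDivSq ((legendrePoly ℓ').comp (1 - 2 * X)) 0 1 a, fun a ha => ?_, ?_, rfl⟩
  · simp only [hP, mul_div_assoc, integral_const_mul]
    exact (tendsto_pv_integral_eval_sub_div_sq _ ha).const_mul _
  · exact (integrableOn_pvIntegralDivSq _ 0 1).continuousOn_mul_of_subset
      (Polynomial.continuous _).continuousOn isCompact_Icc measurableSet_Ioo Ioo_subset_Icc_self
end

section
/- For all nonnegative integers ℓ and ℓ', J(ℓ,ℓ') = J(ℓ',ℓ). (Hence the truncated lightcone Hamiltonian of two-dimensional large-N_c QCD is a symmetric matrix.) -/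
/-!
Put `p x = P_ℓ (1 - 2x)` and `q x = P_ℓ' (1 - 2x)`; all that is used is that `p, q` are `C²`.
Expanding `q y` to second order at `x`, the integrand `p x (q x - q y) / (x - y)²` is
`p x q' x / (x - y)` plus a bounded remainder, and `PV ∫₀¹ dy / (x - y) = log x - log (1 - x)`;
hence the inner principal value exists and is integrable in `x`. The difference of the two
integrands is the antisymmetric kernel `(q x p y - p x q y) / (x - y)²`, whose integral over
`{|x - y| ≥ δ}` vanishes by Fubini. The truncated inner integrals are bounded by
`C (|log x - log (1 - x)| + 1)` uniformly in `δ`, so dominated convergence as `δ → 0` gives the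
symmetry.
-/

open MeasureTheory Filter Set

open Topology Real Function
open scoped Interval ContDiff

noncomputable section

theorem exists_abs_sub_sub_deriv_mul_le {f : ℝ → ℝ} (hf : ContDiff ℝ 2 f) (a b : ℝ) :
    ∃ M : ℝ, 0 ≤ M ∧ ∀ x ∈ Icc a b, ∀ y ∈ Icc a b,
      |f y - f x - deriv f x * (y - x)| ≤ M * (y - x) ^ 2 := by
  obtain ⟨K, hK⟩ := (hf.deriv' (n := 1)).contDiffOn.exists_lipschitzOnWith one_ne_zero
    (convex_Icc a b) isCompact_Icc
  refine ⟨K, K.2, fun x hx y hy => ?_⟩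
  have hxy : uIcc x y ⊆ Icc a b := uIcc_subset_Icc hx hy
  have hdiff : Differentiable ℝ f := hf.differentiable (by norm_num)
  -- the mean value inequality for `z ↦ f z - f' x * z`:
  -- its derivative is `≤ K |y - x|` on `[[x, y]]`
  have key := (convex_uIcc x y).norm_image_sub_le_of_norm_hasDerivWithin_le
    (f := fun z => f z - deriv f x * z) (f' := fun z => deriv f z - deriv f x * 1)
    (C := K * |y - x|)
    (fun z _ => ((hdiff z).hasDerivAt.sub ((hasDerivAt_id' z).const_mul _)).hasDerivWithinAt)
    (fun z hz => ?_) left_mem_uIcc right_mem_uIcc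
  · calc |f y - f x - deriv f x * (y - x)|
        = ‖(f y - deriv f x * y) - (f x - deriv f x * x)‖ := by rw [Real.norm_eq_abs]; ring_nf
      _ ≤ K * |y - x| * |y - x| := key
      _ = K * (y - x) ^ 2 := by rw [mul_assoc, abs_mul_abs_self, sq]
  · rw [mul_one, Real.norm_eq_abs]
    calc |deriv f z - deriv f x| ≤ K * |z - x| := by
          simpa [Real.dist_eq] using hK.dist_le_mul z (hxy hz) x (hxy left_mem_uIcc)
      _ ≤ K * |y - x| := mul_le_mul_of_nonneg_left (abs_sub_left_of_mem_uIcc hz) K.2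

theorem integral_inv_sub {x a b : ℝ} (h : x ∉ [[a, b]]) :
    ∫ y in a..b, (x - y)⁻¹ = log ((x - a) / (x - b)) := by
  rw [intervalIntegral.integral_comp_sub_left (fun y => y⁻¹) x, integral_inv]
  rw [mem_uIcc] at h ⊢
  rintro (⟨h₁, h₂⟩ | ⟨h₁, h₂⟩)
  exacts [h (Or.inl ⟨by linarith, by linarith⟩), h (Or.inr ⟨by linarith, by linarith⟩)]

theorem integral_Ioc_inv_sub {a x δ : ℝ} (hax : a < x) (hδ : 0 < δ) :
    ∫ y in Ioc a (x - δ), (x - y)⁻¹ = log (max (x - a) δ) - log δ := by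
  rcases le_or_gt (x - a) δ with h | h
  · rw [Ioc_eq_empty (not_lt.2 (by linarith)), setIntegral_empty, max_eq_right h, sub_self]
  · rw [← intervalIntegral.integral_of_le (by linarith), integral_inv_sub, max_eq_left h.le,
      sub_sub_cancel, log_div (sub_pos.2 hax).ne' hδ.ne']
    rw [uIcc_of_le (by linarith)]
    exact fun hx => by linarith [hx.2]

theorem integral_Ico_inv_sub {x b δ : ℝ} (hxb : x < b) (hδ : 0 < δ) :
    ∫ y in Ico (x + δ) b, (x - y)⁻¹ = log δ - log (max (b - x) δ) := by
  rcases le_or_gt (b - x) δ with h | h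
  · rw [Ico_eq_empty (not_lt.2 (by linarith)), setIntegral_empty, max_eq_right h, sub_self]
  · rw [integral_Ico_eq_integral_Ioo, ← integral_Ioc_eq_integral_Ioo,
      ← intervalIntegral.integral_of_le (by linarith), integral_inv_sub, max_eq_left h.le,
      show x - (x + δ) = -δ by ring, ← neg_sub b x, neg_div_neg_eq,
      log_div hδ.ne' (sub_pos.2 hxb).ne']
    rw [uIcc_of_le (by linarith)]
    exact fun hx => by linarith [hx.1]

theorem abs_log_max_sub_log_max_le {a b δ : ℝ} (ha : 0 < a) (hb : 0 < b) (hδ : 0 < δ) :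
    |log (max a δ) - log (max b δ)| ≤ |log a - log b| := by
  rw [strictMonoOn_log.monotoneOn.map_max ha hδ, strictMonoOn_log.monotoneOn.map_max hb hδ]
  exact abs_max_sub_max_le_abs _ _ _

theorem integrableOn_log_sub_log_one_sub :
    IntegrableOn (fun x => log x - log (1 - x)) (Ioo 0 1) := by
  have h := (intervalIntegral.intervalIntegrable_log' (a := 1) (b := 0)).comp_sub_left 1
  rw [sub_self, sub_zero] at h
  exact (intervalIntegrable_iff_integrableOn_Ioo_of_le zero_le_one).1
    (intervalIntegral.intervalIntegrable_log'.sub h)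

theorem tendsto_setIntegral_diff_Ioo {E : Type*} [NormedAddCommGroup E] [NormedSpace ℝ E]
    {f : ℝ → E} {s : Set ℝ} (hf : IntegrableOn f s) (x : ℝ) :
    Tendsto (fun δ => ∫ y in s \ Ioo (x - δ) (x + δ), f y) (𝓝[>] 0) (𝓝 (∫ y in s, f y)) := by
  have hind : ∀ δ, ∫ y in s \ Ioo (x - δ) (x + δ), f y
      = ∫ y in s, (Ioo (x - δ) (x + δ))ᶜ.indicator f y := fun δ => by
    rw [setIntegral_indicator measurableSet_Ioo.compl, sdiff_eq]
  simp_rw [hind]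
  refine tendsto_integral_filter_of_dominated_convergence (fun y => ‖f y‖)
    (Eventually.of_forall fun _ => hf.aestronglyMeasurable.indicator measurableSet_Ioo.compl)
    (Eventually.of_forall fun _ => Eventually.of_forall fun _ => norm_indicator_le_norm_self _ _)
    hf.norm ?_
  filter_upwards [ae_restrict_of_ae (volume.ae_ne x)] with y hy
  refine tendsto_const_nhds.congr' ?_
  filter_upwards [nhdsWithin_le_nhds (eventually_lt_nhds (abs_pos.2 (sub_ne_zero.2 hy)))]
    with δ hδ
  refine (indicator_of_mem ?_ f).symm
  rw [← Real.ball_eq_Ioo, mem_compl_iff, Metric.mem_ball, Real.dist_eq, not_lt]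
  exact hδ.le

theorem integral_integral_eq_zero_of_antisymm {α : Type*} [MeasurableSpace α] {μ : Measure α}
    [SFinite μ] {f : α → α → ℝ} (hf : Integrable (uncurry f) (μ.prod μ))
    (hanti : ∀ x y, f y x = -f x y) : ∫ x, ∫ y, f x y ∂μ ∂μ = 0 := by
  have hswap := integral_integral_swap hf
  have hneg : ∀ y, ∫ x, f x y ∂μ = -∫ x, f y x ∂μ := fun y => by
    rw [← integral_neg]
    exact integral_congr_ae (Eventually.of_forall fun x => hanti y x)
  simp only [hneg, integral_neg] at hswap
  linarith

variable {p q : ℝ → ℝ} {x δ : ℝ}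

def taylorQuotient (q : ℝ → ℝ) (x y : ℝ) : ℝ :=
  (q y - q x - deriv q x * (y - x)) / (y - x) ^ 2

theorem exists_abs_taylorQuotient_le (hq : ContDiff ℝ 2 q) (a b : ℝ) :
    ∃ M, ∀ x ∈ Icc a b, ∀ y ∈ Icc a b, |taylorQuotient q x y| ≤ M := by
  obtain ⟨M, hM₀, hM⟩ := exists_abs_sub_sub_deriv_mul_le hq a b
  refine ⟨M, fun x hx y hy => ?_⟩
  rw [taylorQuotient, abs_div, abs_pow, sq_abs]
  exact div_le_of_le_mul₀ (sq_nonneg _) hM₀ (hM x hx y hy)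

theorem measurable_taylorQuotient (hq : Measurable q) :
    Measurable (uncurry (taylorQuotient q)) := by
  have := measurable_deriv q
  unfold taylorQuotient
  fun_prop

theorem integrableOn_taylorQuotient (hq : ContDiff ℝ 2 q) (hx : x ∈ Icc 0 1) :
    IntegrableOn (taylorQuotient q x) (Ioo 0 1) := by
  obtain ⟨M, hM⟩ := exists_abs_taylorQuotient_le hq 0 1
  refine IntegrableOn.of_bound (by simp)
    (measurable_taylorQuotient hq.continuous.measurable).of_uncurry_left.aestronglyMeasurable M ?_
  filter_upwards [ae_restrict_mem measurableSet_Ioo] with y hy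
  exact hM x hx y (Ioo_subset_Icc_self hy)

theorem exists_abs_setIntegral_mul_taylorQuotient_le (hp : Continuous p) (hq : ContDiff ℝ 2 q) :
    ∃ C, ∀ x ∈ Icc (0 : ℝ) 1, ∀ s ⊆ Ioo (0 : ℝ) 1,
      |∫ y in s, p x * taylorQuotient q x y| ≤ C := by
  obtain ⟨A, hA⟩ := (isCompact_Icc (a := (0 : ℝ)) (b := 1)).exists_bound_of_continuousOn
    hp.continuousOn
  obtain ⟨M, hM⟩ := exists_abs_taylorQuotient_le hq 0 1
  have hA₀ : 0 ≤ A := (norm_nonneg _).trans (hA 0 (left_mem_Icc.2 zero_le_one))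
  have hM₀ : 0 ≤ M := (abs_nonneg _).trans (hM 0 (left_mem_Icc.2 zero_le_one) 0
    (left_mem_Icc.2 zero_le_one))
  refine ⟨A * M, fun x hx s hs => ?_⟩
  have hvol : volume.real s ≤ 1 := by
    simpa using measureReal_mono hs (by simp : volume (Ioo (0 : ℝ) 1) ≠ ⊤)
  calc |∫ y in s, p x * taylorQuotient q x y|
      ≤ A * M * volume.real s := by
        rw [← Real.norm_eq_abs]
        refine norm_setIntegral_le_of_norm_le_const
          ((measure_mono hs).trans_lt (measure_Ioo_lt_top (μ := volume))) fun y hy => ?_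
        rw [norm_mul, Real.norm_eq_abs]
        exact mul_le_mul (hA x hx) (hM x hx y (Ioo_subset_Icc_self (hs hy))) (abs_nonneg _) hA₀
    _ ≤ A * M := mul_le_of_le_one_right (mul_nonneg hA₀ hM₀) hvol

theorem integrableOn_integral_mul_taylorQuotient (hp : Continuous p) (hq : ContDiff ℝ 2 q) :
    IntegrableOn (fun x => ∫ y in Ioo 0 1, p x * taylorQuotient q x y) (Ioo 0 1) := by
  obtain ⟨C, hC⟩ := exists_abs_setIntegral_mul_taylorQuotient_le hp hq
  have hmeas : Measurable fun z : ℝ × ℝ => p z.1 * taylorQuotient q z.1 z.2 :=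
    (hp.measurable.comp measurable_fst).mul (measurable_taylorQuotient hq.continuous.measurable)
  refine IntegrableOn.of_bound (by simp)
    hmeas.stronglyMeasurable.integral_prod_right'.aestronglyMeasurable C ?_
  filter_upwards [ae_restrict_mem measurableSet_Ioo] with x hx
  exact hC x (Ioo_subset_Icc_self hx) _ subset_rfl

def truncIoo (x δ : ℝ) : Set ℝ := Ioo 0 1 \ Ioo (x - δ) (x + δ)

theorem measurableSet_truncIoo : MeasurableSet (truncIoo x δ) :=
  measurableSet_Ioo.diff measurableSet_Ioo

theorem truncIoo_subset : truncIoo x δ ⊆ Ioo 0 1 := sdiff_subset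

theorem truncIoo_eq_union (hx : x ∈ Ioo 0 1) (hδ : 0 ≤ δ) :
    truncIoo x δ = Ioc 0 (x - δ) ∪ Ico (x + δ) 1 := by
  ext y
  simp only [truncIoo, Set.mem_sdiff, mem_Ioo, mem_union, mem_Ioc, mem_Ico, not_and_or, not_lt]
  constructor
  · rintro ⟨⟨hy₀, hy₁⟩, hy | hy⟩
    exacts [Or.inl ⟨hy₀, hy⟩, Or.inr ⟨hy, hy₁⟩]
  · rintro (⟨hy₀, hy⟩ | ⟨hy, hy₁⟩)
    exacts [⟨⟨hy₀, by linarith [hx.2]⟩, Or.inl hy⟩,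
      ⟨⟨by linarith [hx.1], hy₁⟩, Or.inr hy⟩]

theorem truncIoo_eq_inter : truncIoo x δ = Ioo 0 1 ∩ {y | δ ≤ |x - y|} := by
  ext y
  rw [truncIoo, Set.mem_sdiff, ← Real.ball_eq_Ioo, Metric.mem_ball, Real.dist_eq, abs_sub_comm,
    not_lt, mem_inter_iff, mem_ofPred_eq]

theorem sub_ne_zero_of_notMem_Ioo {y : ℝ} (hδ : 0 < δ) (hy : y ∉ Ioo (x - δ) (x + δ)) :
    x - y ≠ 0 := by
  rw [sub_ne_zero]
  rintro rfl
  exact hy ⟨by linarith, by linarith⟩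

theorem ContinuousOn.integrableOn_truncIoo {f : ℝ → ℝ}
    (hf : ContinuousOn f (Icc 0 1 \ Ioo (x - δ) (x + δ))) : IntegrableOn f (truncIoo x δ) :=
  (hf.integrableOn_compact (isCompact_Icc.diff isOpen_Ioo)).mono_set
    (sdiff_subset_sdiff_left Ioo_subset_Icc_self)

theorem integrableOn_inv_sub_truncIoo (hδ : 0 < δ) :
    IntegrableOn (fun y => (x - y)⁻¹) (truncIoo x δ) :=
  ContinuousOn.integrableOn_truncIoo <| (continuousOn_const.sub continuousOn_id).inv₀
    fun _ hy => sub_ne_zero_of_notMem_Ioo hδ hy.2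

theorem integral_inv_sub_truncIoo (hx : x ∈ Ioo 0 1) (hδ : 0 < δ) :
    ∫ y in truncIoo x δ, (x - y)⁻¹ = log (max x δ) - log (max (1 - x) δ) := by
  have hint := integrableOn_inv_sub_truncIoo (x := x) hδ
  rw [truncIoo_eq_union hx hδ.le, integrableOn_union] at hint
  have hdisj : Disjoint (Ioc 0 (x - δ)) (Ico (x + δ) 1) :=
    disjoint_left.2 fun y h₁ h₂ => by linarith [h₁.2, h₂.1]
  rw [truncIoo_eq_union hx hδ.le, setIntegral_union hdisj measurableSet_Ico hint.1 hint.2,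
    integral_Ioc_inv_sub hx.1 hδ, integral_Ico_inv_sub hx.2 hδ, sub_zero]
  ring

def pvKernel (p q : ℝ → ℝ) (x y : ℝ) : ℝ := p x * (q x - q y) / (x - y) ^ 2

/-- The inner principal value; the logarithms are `PV ∫₀¹ dy / (x - y)`. -/
def principalValue (p q : ℝ → ℝ) (x : ℝ) : ℝ :=
  p x * deriv q x * (log x - log (1 - x)) - ∫ y in Ioo 0 1, p x * taylorQuotient q x y

theorem integrableOn_pvKernel_truncIoo (hq : Continuous q) (hδ : 0 < δ) :
    IntegrableOn (pvKernel p q x) (truncIoo x δ) :=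
  ContinuousOn.integrableOn_truncIoo <| ContinuousOn.div (by fun_prop) (by fun_prop)
    fun _ hy => pow_ne_zero 2 (sub_ne_zero_of_notMem_Ioo hδ hy.2)

theorem pvKernel_eq_of_ne {y : ℝ} (h : x ≠ y) :
    pvKernel p q x y = p x * deriv q x * (x - y)⁻¹ - p x * taylorQuotient q x y := by
  have h₁ : x - y ≠ 0 := sub_ne_zero.2 h
  have h₂ : y - x ≠ 0 := sub_ne_zero.2 h.symm
  unfold pvKernel taylorQuotient
  field_simp
  ring

theorem integral_pvKernel_truncIoo (hq : ContDiff ℝ 2 q) (hx : x ∈ Ioo 0 1) (hδ : 0 < δ) :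
    ∫ y in truncIoo x δ, pvKernel p q x y =
      p x * deriv q x * (log (max x δ) - log (max (1 - x) δ))
        - ∫ y in truncIoo x δ, p x * taylorQuotient q x y := by
  rw [setIntegral_congr_fun measurableSet_truncIoo fun y hy =>
      pvKernel_eq_of_ne (sub_ne_zero.1 (sub_ne_zero_of_notMem_Ioo hδ hy.2)),
    integral_sub ((integrableOn_inv_sub_truncIoo hδ).const_mul _)
      (((integrableOn_taylorQuotient hq (Ioo_subset_Icc_self hx)).mono_set
        truncIoo_subset).const_mul _),
    integral_const_mul, integral_inv_sub_truncIoo hx hδ]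

theorem tendsto_integral_pvKernel_truncIoo (hq : ContDiff ℝ 2 q) (hx : x ∈ Ioo 0 1) :
    Tendsto (fun δ => ∫ y in truncIoo x δ, pvKernel p q x y) (𝓝[>] 0)
      (𝓝 (principalValue p q x)) := by
  have hreg := tendsto_setIntegral_diff_Ioo
    ((integrableOn_taylorQuotient hq (Ioo_subset_Icc_self hx)).const_mul (p x)) x
  refine (tendsto_const_nhds.sub hreg).congr' ?_
  filter_upwards [Ioo_mem_nhdsGT (lt_min hx.1 (sub_pos.2 hx.2))] with δ hδ
  rw [integral_pvKernel_truncIoo hq hx hδ.1, max_eq_left (hδ.2.le.trans (min_le_left _ _)),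
    max_eq_left (hδ.2.le.trans (min_le_right _ _))]
  rfl

theorem exists_abs_integral_pvKernel_truncIoo_le (hp : Continuous p) (hq : ContDiff ℝ 2 q) :
    ∃ C, ∀ x ∈ Ioo (0 : ℝ) 1, ∀ δ > 0,
      |∫ y in truncIoo x δ, pvKernel p q x y| ≤ C * (|log x - log (1 - x)| + 1) := by
  obtain ⟨A, hA⟩ := (isCompact_Icc (a := (0 : ℝ)) (b := 1)).exists_bound_of_continuousOn
    (hp.mul (hq.continuous_deriv one_le_two)).continuousOn
  obtain ⟨B, hB⟩ := exists_abs_setIntegral_mul_taylorQuotient_le hp hq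
  have hA₀ : 0 ≤ A := (norm_nonneg _).trans (hA 0 (left_mem_Icc.2 zero_le_one))
  have hB₀ : 0 ≤ B := (abs_nonneg _).trans (hB 0 (left_mem_Icc.2 zero_le_one) ∅ (empty_subset _))
  refine ⟨A + B, fun x hx δ hδ => ?_⟩
  have hL := abs_log_max_sub_log_max_le hx.1 (sub_pos.2 hx.2) hδ
  have hpq : |p x * deriv q x| ≤ A := hA x (Ioo_subset_Icc_self hx)
  rw [integral_pvKernel_truncIoo hq hx hδ]
  calc _ ≤ |p x * deriv q x| * |log (max x δ) - log (max (1 - x) δ)|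
        + |∫ y in truncIoo x δ, p x * taylorQuotient q x y| := by
        rw [← abs_mul]; exact abs_sub _ _
    _ ≤ A * |log x - log (1 - x)| + B :=
        add_le_add (mul_le_mul hpq hL (abs_nonneg _) hA₀)
          (hB x (Ioo_subset_Icc_self hx) _ truncIoo_subset)
    _ ≤ (A + B) * (|log x - log (1 - x)| + 1) := by nlinarith [abs_nonneg (log x - log (1 - x))]

theorem integrableOn_principalValue (hp : Continuous p) (hq : ContDiff ℝ 2 q) :
    IntegrableOn (principalValue p q) (Ioo 0 1) := by
  have hc : Continuous fun x => p x * deriv q x := hp.mul (hq.continuous_deriv one_le_two)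
  obtain ⟨A, hA⟩ := (isCompact_Icc (a := (0 : ℝ)) (b := 1)).exists_bound_of_continuousOn
    hc.continuousOn
  refine Integrable.sub (Integrable.bdd_mul (c := A) integrableOn_log_sub_log_one_sub
    hc.aestronglyMeasurable ?_) (integrableOn_integral_mul_taylorQuotient hp hq)
  filter_upwards [ae_restrict_mem measurableSet_Ioo] with x hx using hA x (Ioo_subset_Icc_self hx)

/-- `pvKernel p q - pvKernel q p`, cut off near the diagonal. -/
def cutKernel (p q : ℝ → ℝ) (δ x y : ℝ) : ℝ :=
  if δ ≤ |x - y| then (q x * p y - p x * q y) / (x - y) ^ 2 else 0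

theorem cutKernel_swap (y : ℝ) : cutKernel p q δ y x = -cutKernel p q δ x y := by
  simp only [cutKernel, abs_sub_comm y x]
  split_ifs
  · rw [← neg_sub x y, neg_sq]; ring
  · rw [neg_zero]

theorem measurable_cutKernel (hp : Measurable p) (hq : Measurable q) :
    Measurable (uncurry (cutKernel p q δ)) :=
  Measurable.ite (measurableSet_le measurable_const (by fun_prop)) (by fun_prop) measurable_const

theorem integrable_cutKernel (hp : Continuous p) (hq : Continuous q) (hδ : 0 < δ) :
    Integrable (uncurry (cutKernel p q δ))
      ((volume.restrict (Ioo 0 1)).prod (volume.restrict (Ioo 0 1))) := by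
  have hN : Continuous fun z : ℝ × ℝ => q z.1 * p z.2 - p z.1 * q z.2 := by fun_prop
  obtain ⟨M, hM⟩ := (isCompact_Icc.prod isCompact_Icc).exists_bound_of_continuousOn
    (s := Icc (0 : ℝ) 1 ×ˢ Icc (0 : ℝ) 1) hN.continuousOn
  refine Integrable.of_bound
    (measurable_cutKernel hp.measurable hq.measurable).aestronglyMeasurable (M / δ ^ 2) ?_
  rw [Measure.prod_restrict]
  filter_upwards [ae_restrict_mem (measurableSet_Ioo.prod measurableSet_Ioo)] with z hz
  have hM₀ : 0 ≤ M := (norm_nonneg _).trans (hM z ⟨Ioo_subset_Icc_self hz.1,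
    Ioo_subset_Icc_self hz.2⟩)
  simp only [uncurry, cutKernel]
  split_ifs with h
  · rw [norm_div, norm_pow, Real.norm_eq_abs (z.1 - z.2)]
    exact div_le_div₀ hM₀ (hM z ⟨Ioo_subset_Icc_self hz.1, Ioo_subset_Icc_self hz.2⟩)
      (by positivity) (pow_le_pow_left₀ hδ.le h 2)
  · rw [norm_zero]; positivity

theorem integral_cutKernel (hp : Continuous p) (hq : Continuous q) (hδ : 0 < δ) :
    ∫ y in Ioo 0 1, cutKernel p q δ x y =
      (∫ y in truncIoo x δ, pvKernel p q x y) - ∫ y in truncIoo x δ, pvKernel q p x y := by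
  rw [← integral_sub (integrableOn_pvKernel_truncIoo hq hδ) (integrableOn_pvKernel_truncIoo hp hδ),
    truncIoo_eq_inter,
    ← setIntegral_indicator (measurableSet_le measurable_const (by fun_prop))]
  refine setIntegral_congr_fun measurableSet_Ioo fun y _ => ?_
  simp only [cutKernel, indicator_apply, mem_ofPred_eq, pvKernel]
  split_ifs <;> ring

theorem integral_integral_cutKernel (hp : Continuous p) (hq : Continuous q) (hδ : 0 < δ) :
    ∫ x in Ioo 0 1, ∫ y in Ioo 0 1, cutKernel p q δ x y = 0 :=
  integral_integral_eq_zero_of_antisymm (integrable_cutKernel hp hq hδ) fun _ y => cutKernel_swap y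

theorem tendsto_integral_integral_cutKernel (hp : ContDiff ℝ 2 p) (hq : ContDiff ℝ 2 q) :
    Tendsto (fun δ => ∫ x in Ioo 0 1, ∫ y in Ioo 0 1, cutKernel p q δ x y) (𝓝[>] 0)
      (𝓝 (∫ x in Ioo 0 1, (principalValue p q x - principalValue q p x))) := by
  obtain ⟨C₁, hC₁⟩ := exists_abs_integral_pvKernel_truncIoo_le hp.continuous hq
  obtain ⟨C₂, hC₂⟩ := exists_abs_integral_pvKernel_truncIoo_le hq.continuous hp
  refine tendsto_integral_filter_of_dominated_convergence
    (fun x => (C₁ + C₂) * (|log x - log (1 - x)| + 1)) ?_ ?_ ?_ ?_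
  · exact Eventually.of_forall fun δ =>
      (measurable_cutKernel hp.continuous.measurable hq.continuous.measurable).stronglyMeasurable
        |>.integral_prod_right' |>.aestronglyMeasurable
  · filter_upwards [self_mem_nhdsWithin] with δ hδ
    filter_upwards [ae_restrict_mem measurableSet_Ioo] with x hx
    rw [integral_cutKernel hp.continuous hq.continuous hδ, Real.norm_eq_abs, add_mul]
    exact (abs_sub _ _).trans (add_le_add (hC₁ x hx δ hδ) (hC₂ x hx δ hδ))
  · exact (integrableOn_log_sub_log_one_sub.abs.add (integrable_const 1)).const_mul _
  · filter_upwards [ae_restrict_mem measurableSet_Ioo] with x hx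
    refine ((tendsto_integral_pvKernel_truncIoo hq hx).sub
      (tendsto_integral_pvKernel_truncIoo hp hx)).congr' ?_
    filter_upwards [self_mem_nhdsWithin] with δ hδ
    rw [integral_cutKernel hp.continuous hq.continuous hδ]

theorem integral_principalValue_comm (hp : ContDiff ℝ 2 p) (hq : ContDiff ℝ 2 q) :
    ∫ x in Ioo 0 1, principalValue p q x = ∫ x in Ioo 0 1, principalValue q p x := by
  have hzero : ∫ x in Ioo 0 1, (principalValue p q x - principalValue q p x) = 0 :=
    tendsto_nhds_unique (tendsto_integral_integral_cutKernel hp hq) <|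
      tendsto_const_nhds.congr' <| eventually_mem_nhdsWithin.mono fun _ hδ =>
        (integral_integral_cutKernel hp.continuous hq.continuous hδ).symm
  rwa [integral_sub (integrableOn_principalValue hp.continuous hq)
    (integrableOn_principalValue hq.continuous hp), sub_eq_zero] at hzero

theorem contDiff_legendreP (ℓ : ℕ) : ContDiff ℝ ∞ (legendreP ℓ) := by
  have h : ContDiff ℝ ∞ fun t : ℝ => (t ^ 2 - 1) ^ ℓ := by fun_prop
  unfold legendreP
  rw [iteratedDeriv_eq_iterate]
  exact contDiff_const.mul (h.iterate_deriv ℓ)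

theorem contDiff_legendreP_one_sub_two_mul (ℓ : ℕ) :
    ContDiff ℝ 2 fun x => legendreP ℓ (1 - 2 * x) :=
  contDiff_infty.1 ((contDiff_legendreP ℓ).comp (by fun_prop)) 2

end

/-- Symmetry of the truncated lightcone Hamiltonian of 2D large-`N_c` QCD:
`J(ℓ,ℓ') = J(ℓ',ℓ)` (both are well defined with a common value). -/
theorem J_symm (ℓ ℓ' : ℕ) : ∃ v : ℝ, IsJ ℓ ℓ' v ∧ IsJ ℓ' ℓ v := by
  have hP := contDiff_legendreP_one_sub_two_mul ℓ
  have hQ := contDiff_legendreP_one_sub_two_mul ℓ'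
  refine ⟨_, ⟨_, fun x hx => ?_, integrableOn_principalValue hP.continuous hQ, rfl⟩,
    ⟨_, fun x hx => ?_, integrableOn_principalValue hQ.continuous hP,
      (integral_principalValue_comm hP hQ).symm⟩⟩
  · exact tendsto_integral_pvKernel_truncIoo hQ hx
  · exact tendsto_integral_pvKernel_truncIoo hP hx
end

section
/- Let E be a finite-dimensional complex inner product space, H : E → E a self-adjoint linear operator, and v₀ ∈ E a unit vector. Define recursively, for j ≥ 0: a_j := ⟨v_j, H v_j⟩, w_{j+1} := H v_j − a_j v_j − b_j v_{j−1} (with the conventions v_{−1} := 0 and b₀ := 0), b_{j+1} := ‖w_{j+1}‖, and v_{j+1} := w_{j+1}/b_{j+1} whenever b_{j+1} ≠ 0. If b_j ≠ 0 for all 1 ≤ j ≤ L, then the Lanczos vectors v₀, v₁, …, v_L are orthonormal: ⟨v_i, v_j⟩ = δ_{ij} for all 0 ≤ i, j ≤ L. -/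
/-!
Write `H v_j = b_{j+1} v_{j+1} + a_j v_j + b_j v_{j-1}` and argue by induction on `k`. Assuming
`v_0, …, v_k` orthonormal, the residual `w_{k+1}` is orthogonal to `v_k` by the choice of `a_k`.
For `i < k`, symmetry of `H` moves it to the other side: `⟪v_i, H v_k⟫ = ⟪H v_i, v_k⟫`, and
`H v_i` only involves `v_{i-1}, v_i, v_{i+1}`, so this inner product is `b_{i+1}` if `i + 1 = k`
and `0` otherwise, which is exactly cancelled by the `b_k v_{k-1}` term of the residual.
-/

open scoped InnerProductSpace

namespace Lanczos

variable {𝕜 E : Type*} [RCLike 𝕜] [NormedAddCommGroup E] [InnerProductSpace 𝕜 E]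

def prev (v : ℕ → E) (j : ℕ) : E := if j = 0 then 0 else v (j - 1)

variable (𝕜) in
def OrthonormalUpTo (v : ℕ → E) (k : ℕ) : Prop :=
  ∀ i ≤ k, ∀ j ≤ k, ⟪v i, v j⟫_𝕜 = if i = j then 1 else 0

/-- `residual H v b j` is the paper's `w_{j+1}`. -/
def residual (H : E →ₗ[𝕜] E) (v : ℕ → E) (b : ℕ → ℝ) (j : ℕ) : E :=
  H (v j) - ⟪v j, H (v j)⟫_𝕜 • v j - (b j : 𝕜) • prev v j

variable {H : E →ₗ[𝕜] E} {v : ℕ → E} {b : ℕ → ℝ} {i j k : ℕ}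

theorem orthonormalUpTo_zero (hv : ‖v 0‖ = 1) : OrthonormalUpTo 𝕜 v 0 := by
  intro i hi j hj
  obtain rfl : i = 0 := Nat.le_zero.mp hi
  obtain rfl : j = 0 := Nat.le_zero.mp hj
  simp [inner_self_eq_norm_sq_to_K, hv]

namespace OrthonormalUpTo

theorem succ (h : OrthonormalUpTo 𝕜 v k) (horth : ∀ i ≤ k, ⟪v i, v (k + 1)⟫_𝕜 = 0)
    (hnorm : ‖v (k + 1)‖ = 1) : OrthonormalUpTo 𝕜 v (k + 1) := by
  have hself : ⟪v (k + 1), v (k + 1)⟫_𝕜 = 1 := by simp [inner_self_eq_norm_sq_to_K, hnorm]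
  intro i hi j hj
  rcases Nat.le_succ_iff.mp hi with hi | rfl <;> rcases Nat.le_succ_iff.mp hj with hj | rfl
  · exact h i hi j hj
  · rw [horth i hi, if_neg (by omega)]
  · rw [← inner_conj_symm, horth j hj, map_zero, if_neg (by omega)]
  · rw [hself, if_pos rfl]

theorem inner_prev (h : OrthonormalUpTo 𝕜 v k) (hi : i ≤ k) (hj : j ≤ k + 1) :
    ⟪v i, prev v j⟫_𝕜 = if i + 1 = j then 1 else 0 := by
  rcases j with _ | j
  · simp [prev]
  · simp only [prev, Nat.add_one_ne_zero, if_false, Nat.add_sub_cancel, Nat.add_right_cancel_iff]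
    exact h i hi j (by omega)

theorem inner_residual_self (h : OrthonormalUpTo 𝕜 v k) :
    ⟪v k, residual H v b k⟫_𝕜 = 0 := by
  rw [residual, inner_sub_right, inner_sub_right, inner_smul_right, inner_smul_right,
    h k le_rfl k le_rfl, h.inner_prev le_rfl (by omega), if_pos rfl, if_neg (by omega)]
  ring

theorem inner_residual_of_lt (hH : H.IsSymmetric) (h : OrthonormalUpTo 𝕜 v k)
    (hrec : ∀ j < k, (b (j + 1) : 𝕜) • v (j + 1) = residual H v b j) (hik : i < k) :
    ⟪v i, residual H v b k⟫_𝕜 = 0 := by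
  have hHvi : H (v i) = (b (i + 1) : 𝕜) • v (i + 1) + ⟪v i, H (v i)⟫_𝕜 • v i
      + (b i : 𝕜) • prev v i := by
    rw [hrec i hik, residual]
    abel
  have hprev_vk : ⟪prev v i, v k⟫_𝕜 = 0 := by
    rw [← inner_conj_symm, h.inner_prev le_rfl (by omega), if_neg (by omega), map_zero]
  have hHvi_vk : ⟪H (v i), v k⟫_𝕜 = if i + 1 = k then (b k : 𝕜) else 0 := by
    rw [hHvi, inner_add_left, inner_add_left, inner_smul_left, inner_smul_left, inner_smul_left,
      h (i + 1) hik k le_rfl, h i hik.le k le_rfl, if_neg hik.ne, hprev_vk, RCLike.conj_ofReal]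
    split_ifs with hk
    · subst hk; ring
    · ring
  rw [residual, inner_sub_right, inner_sub_right, ← hH, hHvi_vk, inner_smul_right,
    inner_smul_right, h i hik.le k le_rfl, if_neg hik.ne, h.inner_prev hik.le (by omega)]
  split_ifs <;> ring

end OrthonormalUpTo

theorem orthonormalUpTo_of_recurrence (hH : H.IsSymmetric) {L : ℕ} (hv0 : ‖v 0‖ = 1)
    (hrec : ∀ j < L, (b (j + 1) : 𝕜) • v (j + 1) = residual H v b j)
    (hb : ∀ j < L, b (j + 1) ≠ 0) (hnorm : ∀ j < L, ‖v (j + 1)‖ = 1) :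
    OrthonormalUpTo 𝕜 v L := by
  suffices ∀ k ≤ L, OrthonormalUpTo 𝕜 v k from this L le_rfl
  intro k
  induction k with
  | zero => exact fun _ => orthonormalUpTo_zero hv0
  | succ k ih =>
    intro hk
    have h := ih (by omega)
    have hrec_k : ∀ j < k, (b (j + 1) : 𝕜) • v (j + 1) = residual H v b j :=
      fun j hj => hrec j (by omega)
    refine h.succ (fun i hi => ?_) (hnorm k hk)
    have hres : ⟪v i, residual H v b k⟫_𝕜 = 0 := by
      rcases hi.lt_or_eq with hik | rfl
      · exact h.inner_residual_of_lt hH hrec_k hik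
      · exact h.inner_residual_self
    rw [← hrec k hk, inner_smul_right] at hres
    exact (mul_eq_zero.mp hres).resolve_left (RCLike.ofReal_ne_zero.mpr (hb k hk))

end Lanczos

open Lanczos in
theorem lanczos_orthonormal_general {E : Type*} [NormedAddCommGroup E] [InnerProductSpace ℂ E]
    (H : E →ₗ[ℂ] E) (hH : H.IsSymmetric)
    (L : ℕ) (v w : ℕ → E) (b : ℕ → ℝ)
    (hv0 : ‖v 0‖ = 1)
    (hw : ∀ j : ℕ, w (j + 1) =
      H (v j) - (inner ℂ (v j) (H (v j)) : ℂ) • v j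
        - ((b j : ℂ)) • (if j = 0 then (0 : E) else v (j - 1)))
    (hb : ∀ j : ℕ, b (j + 1) = ‖w (j + 1)‖)
    (hv : ∀ j : ℕ, j < L → v (j + 1) = ((b (j + 1) : ℂ))⁻¹ • w (j + 1))
    (hbne : ∀ j : ℕ, 1 ≤ j → j ≤ L → b j ≠ 0) :
    ∀ i ≤ L, ∀ j ≤ L, (inner ℂ (v i) (v j) : ℂ) = if i = j then 1 else 0 := by
  have hb' : ∀ j < L, b (j + 1) ≠ 0 := fun j hj => hbne (j + 1) (by omega) hj
  have hw' : ∀ j < L, w (j + 1) ≠ 0 := fun j hj =>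
    norm_ne_zero_iff.mp (hb j ▸ hb' j hj)
  refine orthonormalUpTo_of_recurrence hH hv0 (fun j hj => ?_) hb' (fun j hj => ?_)
  · change (b (j + 1) : ℂ) • v (j + 1) = _
    rw [hv j hj, smul_inv_smul₀ (Complex.ofReal_ne_zero.mpr (hb' j hj)), hw j]
    rfl
  · rw [hv j hj, hb j]
    exact norm_smul_inv_norm (hw' j hj)

/-- Orthonormality of the Lanczos vectors: given a self-adjoint (symmetric)
operator `H` on a finite-dimensional complex inner product space, a unit vector
`v₀`, and the three-term Lanczos recurrence
`w_{j+1} = H v_j − ⟨v_j, H v_j⟩ v_j − b_j v_{j−1}` (with `v_{−1} = 0`, `b₀ = 0`),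
`b_{j+1} = ‖w_{j+1}‖`, `v_{j+1} = w_{j+1}/b_{j+1}`, if `b_j ≠ 0` for all
`1 ≤ j ≤ L`, then `v₀, …, v_L` are orthonormal. -/
theorem lanczos_orthonormal {E : Type*} [NormedAddCommGroup E] [InnerProductSpace ℂ E]
    [FiniteDimensional ℂ E] (H : E →ₗ[ℂ] E) (hH : H.IsSymmetric)
    (L : ℕ) (v w : ℕ → E) (b : ℕ → ℝ)
    (hv0 : ‖v 0‖ = 1) (hb0 : b 0 = 0)
    (hw : ∀ j : ℕ, w (j + 1) =
      H (v j) - (inner ℂ (v j) (H (v j)) : ℂ) • v j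
        - ((b j : ℂ)) • (if j = 0 then (0 : E) else v (j - 1)))
    (hb : ∀ j : ℕ, b (j + 1) = ‖w (j + 1)‖)
    (hv : ∀ j : ℕ, j < L → v (j + 1) = ((b (j + 1) : ℂ))⁻¹ • w (j + 1))
    (hbne : ∀ j : ℕ, 1 ≤ j → j ≤ L → b j ≠ 0) :
    ∀ i ≤ L, ∀ j ≤ L, (inner ℂ (v i) (v j) : ℂ) = if i = j then 1 else 0 :=
  lanczos_orthonormal_general H hH L v w b hv0 hw hb hv hbne
end

section
/- Let E be a finite-dimensional complex inner product space, H : E → E a self-adjoint linear operator, and v₀ ∈ E a unit vector such that H^l v₀ ≠ 0 for all 0 ≤ l ≤ L. Define n_l := 1/‖H^l v₀‖ and v_l := n_l · H^l v₀. Then for all 0 ≤ l, l' ≤ L with l + l' even, writing r := (l + l')/2, the overlap and Hamiltonian matrices in this Krylov basis satisfy S_{l,l'} := ⟨v_l, v_{l'}⟩ = n_l n_{l'} / n_r² and H_{l,l'} := ⟨v_l, H v_{l'}⟩ = (n_l n_{l'} / n_r²) · ⟨v_r, H v_r⟩. -/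
/-!
Self-adjointness moves powers of `H` across the inner product, so `⟪H^l v₀, H^{l'} v₀⟫` depends
only on `l + l'` and equals `⟪H^r v₀, H^r v₀⟫ = ‖H^r v₀‖²`; likewise `⟪H^l v₀, H^{l'+1} v₀⟫`
equals `⟪H^r v₀, H (H^r v₀)⟫ = ‖H^r v₀‖² ⟪v_r, H v_r⟫`. Since `n_r = 1/‖H^r v₀‖`, the factor
`‖H^r v₀‖²` is the `1/n_r²` of the identities.
-/

section

variable {𝕜 E : Type*} [RCLike 𝕜] [NormedAddCommGroup E] [InnerProductSpace 𝕜 E]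

theorem LinearMap.IsSymmetric.inner_pow_apply_pow_apply_of_add_eq {H : E →ₗ[𝕜] E}
    (hH : H.IsSymmetric) {a b c d : ℕ} (h : a + b = c + d) (x y : E) :
    inner 𝕜 ((H ^ a) x) ((H ^ b) y) = inner 𝕜 ((H ^ c) x) ((H ^ d) y) := by
  rw [hH.pow a, hH.pow c, ← Module.End.mul_apply, ← Module.End.mul_apply, ← pow_add,
    ← pow_add, h]

theorem inner_map_self_eq_norm_sq_mul_inner_map_normalized [Module ℝ E] [IsScalarTower ℝ 𝕜 E]
    (T : E →ₗ[𝕜] E) (x : E) :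
    inner 𝕜 x (T x) = (‖x‖ : 𝕜) ^ 2 * inner 𝕜 ((1 / ‖x‖) • x) (T ((1 / ‖x‖) • x)) := by
  rcases eq_or_ne x 0 with rfl | hx
  · simp
  · have : (‖x‖ : 𝕜) ≠ 0 := by simpa using hx
    rw [RCLike.real_smul_eq_coe_smul (K := 𝕜), map_smul, inner_smul_left, inner_smul_right,
      RCLike.conj_ofReal]
    push_cast
    field_simp

end

theorem quantum_lanczos_identities_general {E : Type*} [NormedAddCommGroup E]
    [InnerProductSpace ℂ E]
    (H : E →ₗ[ℂ] E) (hH : H.IsSymmetric)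
    (L : ℕ) (v₀ : E)
    (n : ℕ → ℝ) (hn : ∀ l : ℕ, n l = 1 / ‖(H ^ l) v₀‖)
    (v : ℕ → E) (hv : ∀ l : ℕ, v l = n l • (H ^ l) v₀) :
    ∀ l l' : ℕ, l ≤ L → l' ≤ L → ∀ r : ℕ, l + l' = 2 * r →
      (inner ℂ (v l) (v l') : ℂ) = ((n l * n l' / (n r) ^ 2 : ℝ) : ℂ) ∧
      (inner ℂ (v l) (H (v l')) : ℂ) =
        ((n l * n l' / (n r) ^ 2 : ℝ) : ℂ) * (inner ℂ (v r) (H (v r)) : ℂ) := by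
  intro l l' _ _ r hr
  have hcoef : n l * n l' / n r ^ 2 = n l * n l' * ‖(H ^ r) v₀‖ ^ 2 := by
    rw [hn r, one_div_pow, div_div_eq_mul_div, div_one]
  have hH_apply_pow (k : ℕ) : H ((H ^ k) v₀) = (H ^ (k + 1)) v₀ := by
    rw [pow_succ', Module.End.mul_apply]
  have hmid := inner_map_self_eq_norm_sq_mul_inner_map_normalized H ((H ^ r) v₀)
  rw [← hn, ← hv] at hmid
  rw [hv l, hv l']
  simp only [RCLike.real_smul_eq_coe_smul (K := ℂ), map_smul, inner_smul_left, inner_smul_right,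
    RCLike.conj_ofReal, hH_apply_pow, hcoef]
  rw [hH.inner_pow_apply_pow_apply_of_add_eq (show l + l' = r + r by omega),
    hH.inner_pow_apply_pow_apply_of_add_eq (show l + (l' + 1) = r + (r + 1) by omega),
    ← hH_apply_pow, hmid, inner_self_eq_norm_sq_to_K]
  simp only [RCLike.ofReal_eq_complex_ofReal]
  push_cast
  constructor <;> ring

/-- The quantum Lanczos identities: for a self-adjoint operator `H` on a
finite-dimensional complex inner product space and a unit vector `v₀` with
`H^l v₀ ≠ 0` for `0 ≤ l ≤ L`, set `n_l = 1/‖H^l v₀‖` and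
`v_l = n_l · H^l v₀`. Then for `0 ≤ l, l' ≤ L` with `l + l'` even and
`r = (l + l')/2`, the overlap and Hamiltonian matrices satisfy
`S_{l,l'} = ⟨v_l, v_{l'}⟩ = n_l n_{l'}/n_r²` and
`H_{l,l'} = ⟨v_l, H v_{l'}⟩ = (n_l n_{l'}/n_r²)·⟨v_r, H v_r⟩`. -/
theorem quantum_lanczos_identities {E : Type*} [NormedAddCommGroup E]
    [InnerProductSpace ℂ E] [FiniteDimensional ℂ E]
    (H : E →ₗ[ℂ] E) (hH : H.IsSymmetric)
    (L : ℕ) (v₀ : E) (hv₀ : ‖v₀‖ = 1)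
    (hne : ∀ l : ℕ, l ≤ L → (H ^ l) v₀ ≠ 0)
    (n : ℕ → ℝ) (hn : ∀ l : ℕ, n l = 1 / ‖(H ^ l) v₀‖)
    (v : ℕ → E) (hv : ∀ l : ℕ, v l = n l • (H ^ l) v₀) :
    ∀ l l' : ℕ, l ≤ L → l' ≤ L → ∀ r : ℕ, l + l' = 2 * r →
      (inner ℂ (v l) (v l') : ℂ) = ((n l * n l' / (n r) ^ 2 : ℝ) : ℂ) ∧
      (inner ℂ (v l) (H (v l')) : ℂ) =
        ((n l * n l' / (n r) ^ 2 : ℝ) : ℂ) * (inner ℂ (v r) (H (v r)) : ℂ) :=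
  quantum_lanczos_identities_general H hH L v₀ n hn v hv
end
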